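/- The group with presentation ⟨a, b | a^3 = 1, b^5 = 1, (aba^{-1}b^{-1}ab^2)^2 = 1⟩ is infinite. -/
import Mathlib


/-- The relators  of ⟨a, b | a^3 = b^5 = (aba⁻¹b⁻¹ab²)² = 1⟩. -/
def Trels : Set (FreeGroup (Fin 2)) :=
  {(FreeGroup.of 0) ^ 3, (FreeGroup.of 1) ^ 5,
   (FreeGroup.of 0 * FreeGroup.of 1 * (FreeGroup.of 0)⁻¹ * (FreeGroup.of 1)⁻¹ *
     FreeGroup.of 0 * (FreeGroup.of 1) ^ 2) ^ 2}

/-- The corresponding presented group. -/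
abbrev T : Type := PresentedGroup Trels

/-! ### An auxiliary wreath-product-like group `ℤ¹² ⋊ Sym(12)` -/

structure W where
  v : Fin 12 → ℤ
  p : Equiv.Perm (Fin 12)

namespace W

@[ext] lemma ext {x y : W} (hv : x.v = y.v) (hp : x.p = y.p) : x = y := by
  cases x; cases y; cases hv; cases hp; rfl

instance : DecidableEq W := fun x y =>
  decidable_of_iff (x.v = y.v ∧ x.p = y.p)
    (by constructor
        · rintro ⟨h1, h2⟩; exact ext h1 h2
        · rintro rfl; exact ⟨rfl, rfl⟩)

instance : Group W where
  mul x y := ⟨fun i => x.v i + y.v (x.p i), x.p.trans y.p⟩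
  one := ⟨0, Equiv.refl _⟩
  inv x := ⟨fun i => -x.v (x.p.symm i), x.p.symm⟩
  mul_assoc x y z := by
    refine ext ?_ ?_
    · funext i
      show x.v i + y.v (x.p i) + z.v ((x.p.trans y.p) i)
          = x.v i + (y.v (x.p i) + z.v (y.p (x.p i)))
      simp [Equiv.trans_apply, add_assoc]
    · exact (Equiv.trans_assoc _ _ _)
  one_mul x := by
    refine ext ?_ ?_
    · funext i
      show (0 : Fin 12 → ℤ) i + x.v ((Equiv.refl _) i) = x.v i
      simp
    · exact Equiv.refl_trans _
  mul_one x := by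
    refine ext ?_ ?_
    · funext i
      show x.v i + (0 : Fin 12 → ℤ) (x.p i) = x.v i
      simp
    · exact Equiv.trans_refl _
  inv_mul_cancel x := by
    refine ext ?_ ?_
    · funext i
      show -x.v (x.p.symm i) + x.v (x.p.symm i) = (0 : Fin 12 → ℤ) i
      simp
    · exact Equiv.symm_trans_self _

lemma mul_v (x y : W) : (x * y).v = fun i => x.v i + y.v (x.p i) := rfl
lemma mul_p (x y : W) : (x * y).p = x.p.trans y.p := rfl
lemma one_v : (1 : W).v = 0 := rfl
lemma one_p : (1 : W).p = Equiv.refl _ := rfl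

end W

/-- image of the first generator -/
def WA : W :=
  ⟨![0,0,0,0,0,0,-2,2,0,0,0,0],
   ⟨![1,3,5,0,6,8,7,4,2,10,11,9], ![3,0,8,1,7,2,4,6,5,11,9,10], by decide, by decide⟩⟩

/-- image of the second generator -/
def WB : W :=
  ⟨![0,0,-1,0,0,0,0,1,-2,1,1,0],
   ⟨![2,4,1,3,7,9,10,0,5,6,8,11], ![7,2,0,3,1,8,9,4,10,5,6,11], by decide, by decide⟩⟩

def fgen : Fin 2 → W := ![WA, WB]

lemma hrels : ∀ r ∈ Trels, FreeGroup.lift fgen r = 1 := by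
  intro r hr
  simp only [Trels, Set.mem_insert_iff, Set.mem_singleton_iff] at hr
  rcases hr with rfl | rfl | rfl <;>
    simp only [map_pow, map_mul, map_inv, FreeGroup.lift_apply_of, fgen,
      Matrix.cons_val_zero, Matrix.cons_val_one, Matrix.head_cons] <;>
    decide

def φ : T →* W := PresentedGroup.toGroup hrels

/-- The element a b² a b² of T. -/
def t : T := PresentedGroup.of 0 * (PresentedGroup.of 1) ^ 2 *
    PresentedGroup.of 0 * (PresentedGroup.of 1) ^ 2

def U : W := WA * WB ^ 2 * WA * WB ^ 2

lemma hφt : φ t = U := by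
  simp only [t, U, φ, map_mul, map_pow, PresentedGroup.toGroup.of, fgen,
    Matrix.cons_val_zero, Matrix.cons_val_one, Matrix.head_cons]

lemma hUp : U.p = Equiv.refl _ := by decide

lemma hUv : U.v 0 = 3 := by decide

lemma hUpow : ∀ n : ℕ, (U ^ n).p = Equiv.refl _ ∧ (U ^ n).v 0 = 3 * n := by
  intro n
  induction n with
  | zero => exact ⟨rfl, rfl⟩
  | succ n ih =>
    constructor
    · rw [pow_succ, W.mul_p, ih.1, hUp]
      rfl
    · rw [pow_succ, W.mul_v]
      show (U ^ n).v 0 + U.v ((U ^ n).p 0) = 3 * (n + 1 : ℕ)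
      rw [ih.1, ih.2]
      show 3 * (n : ℤ) + U.v 0 = 3 * ((n : ℤ) + 1)
      rw [hUv]; ring

/-- The generalized triangle group ⟨a, b | a³ = b⁵ = (aba⁻¹b⁻¹ab²)² = 1⟩ is infinite. -/
theorem triangle_group_infinite : Infinite T := by
  apply Infinite.of_injective (fun n : ℕ => t ^ n)
  intro m n h
  simp only at h
  have h2 : (U ^ m).v 0 = (U ^ n).v 0 := by
    rw [← hφt, ← map_pow, ← map_pow, h]
  rw [(hUpow m).2, (hUpow n).2] at h2
  omega
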